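/- Let N ≥ 2 and let ⋆ be a causal product determined by data (T_n, σ_n), n = 0,…,N−1. Then for all positive definite N×N complex matrices A = (a_{jk}) and B = (b_{jk}): det((A ⋆ B)_{N−1}) ≥ ( (det A_{N−1} / det A_{N−2}) · b_{σ_{N−1}(N−1),σ_{N−1}(N−1)} + (det B_{N−1} / det B_{N−2}) · a_{σ_{N−1}^{-1}(N−1),σ_{N−1}^{-1}(N−1)} − (det A_{N−1} / det A_{N−2}) · (det B_{N−1} / det B_{N−2}) · 𝟙[σ_{N−1}(N−1) = N−1] ) · det((A ⋆ B)_{N−2}), where M_n denotes the leading principal (n+1)×(n+1) submatrix of a matrix M and 𝟙[·] is 1 if the condition holds and 0 otherwise. -/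

import Mathlib

open Finset Matrix ComplexOrder

/-- The causal product determined by data `(T_n, σ_n)`: for `N × N` complex matrices,
`(A ⋆ B)_{jk} = ∑_{(p,q) ∈ T_j × T_k} a_{p,q} b_{σ_j(p), σ_k(q)}`. -/
noncomputable def causal {N : ℕ} (T : Fin N → Finset (Fin N))
    (σ : ∀ n, Equiv.Perm {x // x ∈ T n}) (A B : Matrix (Fin N) (Fin N) ℂ) :
    Matrix (Fin N) (Fin N) ℂ :=
  Matrix.of fun j k =>
    ∑ p ∈ (T j).attach, ∑ q ∈ (T k).attach, A p.1 q.1 * B (σ j p).1 (σ k q).1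

/-- `leadDet A n` is the determinant of the leading principal `(n+1) × (n+1)`
submatrix `A_n = (a_{jk})_{j,k=0}^{n}` of `A` (junk value `0` if `n ≥ N`). -/
noncomputable def leadDet {N : ℕ} (A : Matrix (Fin N) (Fin N) ℂ) (n : ℕ) : ℂ :=
  if h : n < N then
    (A.submatrix (Fin.castLE h) (Fin.castLE h) : Matrix (Fin (n + 1)) (Fin (n + 1)) ℂ).det
  else 0

/-!
Let `m = N - 1`, `E = e_m e_mᵀ` and `α = det A_{N-1} / det A_{N-2}`, the Schur complement of
`A_{N-2}` in `A`; likewise `β` for `B`. Then `A - αE` and `B - βE` are positive semidefinite.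
Since `T_j ⊆ {0,…,j}`, the index `m` occurs only in `T_m`, so bilinearity of `⋆` gives
`A ⋆ B = (A - αE) ⋆ (B - βE) + cE`, where `c` is the bracket on the left of the inequality.
Expanding along the last row, `det (A ⋆ B) = det ((A - αE) ⋆ (B - βE)) + c · det (A ⋆ B)_{N-2}`,
and the first summand is nonnegative because a causal product of positive semidefinite matrices
is a compression `Vᴴ (A ⊗ B) V` of their Kronecker product.
-/

open scoped Kronecker

theorem Finset.sum_attach_ite_eq {α M : Type*} [AddCommMonoid M] [DecidableEq α] {s : Finset α}
    {a : α} (ha : a ∈ s) (f : s → M) :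
    ∑ x ∈ s.attach, (if a = x.1 then f x else 0) = f ⟨a, ha⟩ := by
  simp_rw [← Subtype.ext_iff (a1 := ⟨a, ha⟩)]
  simp

theorem Finset.sum_attach_ite_perm_eq {α M : Type*} [AddCommMonoid M] [DecidableEq α]
    {s : Finset α} {a : α} (ha : a ∈ s) (e : Equiv.Perm s) (f : s → M) :
    ∑ x ∈ s.attach, (if a = (e x).1 then f x else 0) = f (e.symm ⟨a, ha⟩) := by
  have := Equiv.sum_comp e fun y => if a = y.1 then f (e.symm y) else 0
  simp only [Equiv.symm_apply_apply] at this
  rw [Finset.attach_eq_univ, this, ← Finset.attach_eq_univ, Finset.sum_attach_ite_eq ha]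

namespace Matrix

theorem det_add_single_self {n R : Type*} [Fintype n] [DecidableEq n] [CommRing R]
    (M : Matrix n n R) (i : n) (c : R) :
    (M + single i i c).det = M.det + c * M.adjugate i i := by
  have hrow : M + single i i c = M.updateRow i (M i + c • Pi.single i 1) := by
    ext j k
    rcases eq_or_ne j i with rfl | hj
    · simp [single_apply, Pi.single_apply, eq_comm]
    · simp [updateRow_ne hj, single_apply_of_row_ne hj.symm]
  rw [hrow, det_updateRow_add, updateRow_eq_self, det_updateRow_smul, adjugate_apply]

theorem adjugate_last_last {R : Type*} [CommRing R] {m : ℕ}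
    (M : Matrix (Fin (m + 1)) (Fin (m + 1)) R) :
    M.adjugate (Fin.last m) (Fin.last m) = (M.submatrix Fin.castSucc Fin.castSucc).det := by
  simp [adjugate_fin_succ_eq_det_submatrix, ← two_mul]

theorem submatrix_castSucc_add_single_last {R : Type*} [AddZeroClass R] {m : ℕ}
    (M : Matrix (Fin (m + 1)) (Fin (m + 1)) R) (c : R) :
    (M + single (Fin.last m) (Fin.last m) c).submatrix Fin.castSucc Fin.castSucc
      = M.submatrix Fin.castSucc Fin.castSucc := by
  ext i j
  simp [single_apply_of_row_ne (Fin.castSucc_lt_last i).ne']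

theorem single_last_submatrix_finSumFinEquiv {R : Type*} [Zero R] {m : ℕ} (c : R) :
    (single (Fin.last (m + 1)) (Fin.last (m + 1)) c).submatrix finSumFinEquiv finSumFinEquiv
      = fromBlocks 0 0 0 (of fun _ _ => c) := by
  ext (i | i) (j | j) <;> simp [single_apply, Fin.ext_iff, Fin.last] <;> omega

variable {𝕜 : Type*} [RCLike 𝕜]

theorem PosDef.posSemidef_fromBlocks_schur {m n : Type*} [Fintype m] [DecidableEq m]
    [Fintype n] {A : Matrix m m 𝕜} (hA : A.PosDef) (B : Matrix m n 𝕜) :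
    (fromBlocks A B Bᴴ (Bᴴ * A⁻¹ * B)).PosSemidef := by
  have := hA.isUnit.invertible
  rw [PosDef.fromBlocks₁₁ _ _ hA, sub_self]
  exact .zero

theorem PosDef.posSemidef_sub_single_last {m : ℕ} {A : Matrix (Fin (m + 2)) (Fin (m + 2)) 𝕜}
    (hA : A.PosDef) :
    (A - single (Fin.last (m + 1)) (Fin.last (m + 1))
      (A.det / (A.submatrix Fin.castSucc Fin.castSucc).det)).PosSemidef := by
  set e : Fin (m + 1) ⊕ Fin 1 ≃ Fin (m + 2) := finSumFinEquiv
  obtain ⟨A₀, B, C, D, hblocks⟩ : ∃ A₀ B C D, A.submatrix e e = fromBlocks A₀ B C D :=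
    ⟨_, _, _, _, (fromBlocks_toBlocks _).symm⟩
  have hM : (fromBlocks A₀ B C D).PosDef := hblocks ▸ hA.submatrix e.injective
  obtain rfl : C = Bᴴ := ((isHermitian_fromBlocks_iff.mp hM.isHermitian).2.1).symm
  have hA₀ : A₀.PosDef := hM.submatrix Sum.inl_injective
  have hsub : A.submatrix Fin.castSucc Fin.castSucc = A₀ := by
    ext i j; exact congr($hblocks (Sum.inl i) (Sum.inl j))
  have := hA₀.isUnit.invertible
  have hdet : A.det = A₀.det * (D - Bᴴ * A₀⁻¹ * B) 0 0 := by
    rw [← det_submatrix_equiv_self e, hblocks, det_fromBlocks₁₁, det_fin_one,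
      invOf_eq_nonsing_inv]
  rw [← posSemidef_submatrix_equiv e, submatrix_sub, Pi.sub_apply, Pi.sub_apply, hblocks,
    single_last_submatrix_finSumFinEquiv, sub_eq_add_neg, fromBlocks_neg, fromBlocks_add]
  simp only [neg_zero, add_zero]
  convert hA₀.posSemidef_fromBlocks_schur B using 2
  ext i j
  fin_cases i; fin_cases j
  simp [hsub, hdet, hA₀.det_pos.ne']

end Matrix

def causalEmbedding {N : ℕ} (T : Fin N → Finset (Fin N)) (σ : ∀ n, Equiv.Perm {x // x ∈ T n}) :
    Matrix (Fin N × Fin N) (Fin N) ℂ :=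
  of fun x k => ∑ q ∈ (T k).attach, if x = (q.1, (σ k q).1) then 1 else 0

theorem causal_eq_conjTranspose_mul_kronecker_mul {N : ℕ} (T : Fin N → Finset (Fin N))
    (σ : ∀ n, Equiv.Perm {x // x ∈ T n}) (A B : Matrix (Fin N) (Fin N) ℂ) :
    causal T σ A B = (causalEmbedding T σ)ᴴ * (A ⊗ₖ B) * causalEmbedding T σ := by
  ext j k
  simp only [causal, mul_apply, conjTranspose_apply, causalEmbedding, of_apply, star_sum,
    apply_ite star, star_one, star_zero, Finset.sum_mul, Finset.mul_sum, ite_mul, mul_ite,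
    one_mul, zero_mul, mul_zero, mul_one]
  rw [Finset.sum_comm]
  simp_rw [Finset.sum_comm (s := (Finset.univ : Finset (Fin N × Fin N))), Finset.sum_ite_eq',
    Finset.mem_univ, if_true, kroneckerMap_apply]

theorem causal_posSemidef {N : ℕ} (T : Fin N → Finset (Fin N))
    (σ : ∀ n, Equiv.Perm {x // x ∈ T n}) {A B : Matrix (Fin N) (Fin N) ℂ}
    (hA : A.PosSemidef) (hB : B.PosSemidef) : (causal T σ A B).PosSemidef := by
  rw [causal_eq_conjTranspose_mul_kronecker_mul]
  exact (hA.kronecker hB).conjTranspose_mul_mul_same _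

theorem causal_sub_left {N : ℕ} (T : Fin N → Finset (Fin N))
    (σ : ∀ n, Equiv.Perm {x // x ∈ T n}) (A A' B : Matrix (Fin N) (Fin N) ℂ) :
    causal T σ (A - A') B = causal T σ A B - causal T σ A' B := by
  ext j k; simp [causal, sub_mul]

theorem causal_sub_right {N : ℕ} (T : Fin N → Finset (Fin N))
    (σ : ∀ n, Equiv.Perm {x // x ∈ T n}) (A B B' : Matrix (Fin N) (Fin N) ℂ) :
    causal T σ A (B - B') = causal T σ A B - causal T σ A B' := by
  ext j k; simp [causal, mul_sub]

section LastIndex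

variable {n : ℕ} {T : Fin (n + 1) → Finset (Fin (n + 1))} {σ : ∀ j, Equiv.Perm {x // x ∈ T j}}
  (hT : ∀ j, T j ⊆ Finset.Iic j) (hmem : ∀ j, j ∈ T j)
include hT hmem

theorem last_mem_iff_eq_last (j : Fin (n + 1)) : Fin.last n ∈ T j ↔ j = Fin.last n :=
  ⟨fun h => le_antisymm (Fin.le_last j) (Finset.mem_Iic.mp (hT j h)), fun h => h ▸ hmem j⟩

theorem causal_single_last_left (c : ℂ) (X : Matrix (Fin (n + 1)) (Fin (n + 1)) ℂ) :
    causal T σ (single (Fin.last n) (Fin.last n) c) X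
      = single (Fin.last n) (Fin.last n)
          (c * X (σ _ ⟨_, hmem (Fin.last n)⟩).1 (σ _ ⟨_, hmem (Fin.last n)⟩).1) := by
  ext j k
  by_cases hjk : j = Fin.last n ∧ k = Fin.last n
  · obtain ⟨rfl, rfl⟩ := hjk
    simp only [causal, of_apply, single_apply, ite_and, ite_mul, zero_mul, and_self, if_true,
      Finset.sum_ite_irrel, Finset.sum_const_zero, Finset.sum_attach_ite_eq (hmem _)]
  · simp only [causal, of_apply, single_apply]
    rw [if_neg (by tauto)]
    refine Finset.sum_eq_zero fun p _ => Finset.sum_eq_zero fun q _ => ?_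
    rw [if_neg, zero_mul]
    rintro ⟨hp, hq⟩
    exact hjk ⟨(last_mem_iff_eq_last hT hmem j).mp (hp ▸ p.2),
      (last_mem_iff_eq_last hT hmem k).mp (hq ▸ q.2)⟩

theorem causal_single_last_right (c : ℂ) (X : Matrix (Fin (n + 1)) (Fin (n + 1)) ℂ) :
    causal T σ X (single (Fin.last n) (Fin.last n) c)
      = single (Fin.last n) (Fin.last n)
          (X ((σ _).symm ⟨_, hmem (Fin.last n)⟩).1 ((σ _).symm ⟨_, hmem (Fin.last n)⟩).1
            * c) := by
  ext j k
  by_cases hjk : j = Fin.last n ∧ k = Fin.last n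
  · obtain ⟨rfl, rfl⟩ := hjk
    simp only [causal, of_apply, single_apply, ite_and, mul_ite, mul_zero, and_self, if_true,
      Finset.sum_ite_irrel, Finset.sum_const_zero, Finset.sum_attach_ite_perm_eq (hmem _)]
  · simp only [causal, of_apply, single_apply]
    rw [if_neg (by tauto)]
    refine Finset.sum_eq_zero fun p _ => Finset.sum_eq_zero fun q _ => ?_
    rw [if_neg, mul_zero]
    rintro ⟨hp, hq⟩
    exact hjk ⟨(last_mem_iff_eq_last hT hmem j).mp (hp ▸ (σ j p).2),
      (last_mem_iff_eq_last hT hmem k).mp (hq ▸ (σ k q).2)⟩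

theorem causal_eq_causal_sub_single_add_single (A B : Matrix (Fin (n + 1)) (Fin (n + 1)) ℂ)
    (α β : ℂ) :
    causal T σ A B
      = causal T σ (A - single (Fin.last n) (Fin.last n) α)
          (B - single (Fin.last n) (Fin.last n) β)
        + single (Fin.last n) (Fin.last n)
          (α * B (σ _ ⟨_, hmem (Fin.last n)⟩).1 (σ _ ⟨_, hmem (Fin.last n)⟩).1
            + β * A ((σ _).symm ⟨_, hmem (Fin.last n)⟩).1 ((σ _).symm ⟨_, hmem (Fin.last n)⟩).1
            - α * β * if (σ _ ⟨_, hmem (Fin.last n)⟩).1 = Fin.last n then 1 else 0) := by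
  simp only [causal_sub_left, causal_sub_right]
  simp only [causal_single_last_left hT hmem, causal_single_last_right hT hmem]
  ext j k
  simp only [Matrix.add_apply, Matrix.sub_apply, single_apply, and_self,
    @eq_comm _ (Fin.last n)]
  split_ifs <;> ring

end LastIndex

theorem leadDet_eq_det {n : ℕ} (A : Matrix (Fin (n + 1)) (Fin (n + 1)) ℂ) :
    leadDet A n = A.det := by
  rw [leadDet, dif_pos n.lt_succ_self]
  exact congrArg det (submatrix_id_id A)

theorem leadDet_eq_det_submatrix_castSucc {n : ℕ} (A : Matrix (Fin (n + 2)) (Fin (n + 2)) ℂ) :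
    leadDet A n = (A.submatrix Fin.castSucc Fin.castSucc).det := by
  rw [leadDet, dif_pos (by omega)]
  rfl

/-- For `N ≥ 2`, positive definite `A, B ∈ ℂ^{N×N}` and any causal product `⋆`,
writing `C = A ⋆ B` and `m = N-1`:
`det C_{N-1} ≥ ((det A_{N-1}/det A_{N-2}) b_{σ_m(m),σ_m(m)}
  + (det B_{N-1}/det B_{N-2}) a_{σ_m⁻¹(m),σ_m⁻¹(m)}
  - (det A_{N-1}/det A_{N-2})(det B_{N-1}/det B_{N-2}) 𝟙[σ_m(m) = m]) · det C_{N-2}`. -/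
theorem causal_det_step {N : ℕ} (hN : 2 ≤ N) (T : Fin N → Finset (Fin N))
    (hT : ∀ n, T n ⊆ Finset.Iic n) (hmem : ∀ n, n ∈ T n)
    (σ : ∀ n, Equiv.Perm {x // x ∈ T n})
    (A B : Matrix (Fin N) (Fin N) ℂ) (hA : A.PosDef) (hB : B.PosDef) :
    ((leadDet A (N - 1) / leadDet A (N - 2))
          * B (σ ⟨N - 1, by omega⟩ ⟨⟨N - 1, by omega⟩, hmem ⟨N - 1, by omega⟩⟩).1
              (σ ⟨N - 1, by omega⟩ ⟨⟨N - 1, by omega⟩, hmem ⟨N - 1, by omega⟩⟩).1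
        + (leadDet B (N - 1) / leadDet B (N - 2))
          * A ((σ ⟨N - 1, by omega⟩).symm ⟨⟨N - 1, by omega⟩, hmem ⟨N - 1, by omega⟩⟩).1
              ((σ ⟨N - 1, by omega⟩).symm ⟨⟨N - 1, by omega⟩, hmem ⟨N - 1, by omega⟩⟩).1
        - (leadDet A (N - 1) / leadDet A (N - 2)) * (leadDet B (N - 1) / leadDet B (N - 2))
          * (if (σ ⟨N - 1, by omega⟩ ⟨⟨N - 1, by omega⟩, hmem ⟨N - 1, by omega⟩⟩).1
                = (⟨N - 1, by omega⟩ : Fin N) then 1 else 0))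
        * leadDet (causal T σ A B) (N - 2)
      ≤ leadDet (causal T σ A B) (N - 1) := by
  obtain ⟨n, rfl⟩ : ∃ n, N = n + 2 := ⟨N - 2, by omega⟩
  have hlast : (⟨n + 1, by omega⟩ : Fin (n + 2)) = Fin.last (n + 1) := rfl
  simp only [show n + 2 - 1 = n + 1 from rfl, show n + 2 - 2 = n from rfl, hlast]
  rw [leadDet_eq_det A, leadDet_eq_det B, leadDet_eq_det_submatrix_castSucc A,
    leadDet_eq_det_submatrix_castSucc B, causal_eq_causal_sub_single_add_single hT hmem A B,
    leadDet_eq_det, leadDet_eq_det_submatrix_castSucc, submatrix_castSucc_add_single_last,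
    det_add_single_self, adjugate_last_last]
  have hC := causal_posSemidef T σ hA.posSemidef_sub_single_last hB.posSemidef_sub_single_last
  exact le_add_of_nonneg_left hC.det_nonneg
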